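/- Let h = (h₁, h₂) : ℝ³ → ℝ² with h₁(x) = x₃cos(x₁) + x₄sin(x₁) + β₁u₃sin(2x₁) + β₁u₄cos(2x₁) and h₂(x) = x₃sin(x₁) - x₄cos(x₁) - β₁u₃cos(2x₁) - β₁u₄sin(2x₁), where |u₃| ≤ κ_{u3}, |u₄| ≤ κ_{u4}. Then for all x, x̂ in the region where |x₃|,|x̂₃| ≤ κ_{x3}, |x₄|,|x̂₄| ≤ κ_{x4}, one has ‖h(x) - h(x̂)‖₂ ≤ γ_h ‖x - x̂‖₂ with γ_h = √2·(κ_{x3} + κ_{x4} + 2|β₁|(κ_{u3}+κ_{u4}) + √2). -/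
import Mathlib

private lemma sin_lip' (a b : ℝ) : |Real.sin a - Real.sin b| ≤ |a - b| := by
  rw [Real.sin_sub_sin]
  have h1 : |Real.sin ((a - b) / 2)| ≤ |(a - b) / 2| := Real.abs_sin_le_abs
  have h2 : |Real.cos ((a + b) / 2)| ≤ 1 := Real.abs_cos_le_one _
  have h3 := mul_le_mul h1 h2 (abs_nonneg _) (abs_nonneg _)
  calc |2 * Real.sin ((a - b) / 2) * Real.cos ((a + b) / 2)|
      = 2 * (|Real.sin ((a - b) / 2)| * |Real.cos ((a + b) / 2)|) := by
        rw [abs_mul, abs_mul, abs_two]; ring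
    _ ≤ 2 * (|(a - b) / 2| * 1) := by linarith
    _ = |a - b| := by rw [abs_div, abs_two]; ring

private lemma cos_lip' (a b : ℝ) : |Real.cos a - Real.cos b| ≤ |a - b| := by
  rw [Real.cos_sub_cos]
  have h1 : |Real.sin ((a - b) / 2)| ≤ |(a - b) / 2| := Real.abs_sin_le_abs
  have h2 : |Real.sin ((a + b) / 2)| ≤ 1 := Real.abs_sin_le_one _
  have h3 := mul_le_mul h2 h1 (abs_nonneg _) (by norm_num : (0:ℝ) ≤ 1)
  calc |-2 * Real.sin ((a + b) / 2) * Real.sin ((a - b) / 2)|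
      = 2 * (|Real.sin ((a + b) / 2)| * |Real.sin ((a - b) / 2)|) := by
        rw [abs_mul, abs_mul, abs_neg, abs_two]; ring
    _ ≤ 2 * (1 * |(a - b) / 2|) := by linarith
    _ = |a - b| := by rw [abs_div, abs_two]; ring

private lemma abs_add₆ (a b c d e f : ℝ) :
    |a + b + c + d + e + f| ≤ |a| + |b| + |c| + |d| + |e| + |f| := by
  calc |a + b + c + d + e + f| ≤ |a + b + c + d + e| + |f| := abs_add_le _ _
    _ ≤ (|a + b + c + d| + |e|) + |f| := by
        have := abs_add_le (a + b + c + d) e; linarith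
    _ ≤ ((|a + b + c| + |d|) + |e|) + |f| := by
        have := abs_add_le (a + b + c) d; linarith
    _ ≤ (((|a + b| + |c|) + |d|) + |e|) + |f| := by
        have := abs_add_le (a + b) c; linarith
    _ ≤ |a| + |b| + |c| + |d| + |e| + |f| := by
        have := abs_add_le a b; linarith

set_option maxHeartbeats 1000000 in
theorem stmt_11 (β₁ u₃ u₄ κu3 κu4 κx3 κx4 : ℝ)
    (hκu3 : 0 ≤ κu3) (hκu4 : 0 ≤ κu4) (hκx3 : 0 ≤ κx3) (hκx4 : 0 ≤ κx4)
    (hu3 : |u₃| ≤ κu3) (hu4 : |u₄| ≤ κu4)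
    (h : EuclideanSpace ℝ (Fin 3) → EuclideanSpace ℝ (Fin 2))
    (hh1 : ∀ x, h x 0 =
      x 1 * Real.cos (x 0) + x 2 * Real.sin (x 0)
      + β₁ * u₃ * Real.sin (2 * x 0) + β₁ * u₄ * Real.cos (2 * x 0))
    (hh2 : ∀ x, h x 1 =
      x 1 * Real.sin (x 0) - x 2 * Real.cos (x 0)
      - β₁ * u₃ * Real.cos (2 * x 0) - β₁ * u₄ * Real.sin (2 * x 0)) :
    ∀ x y : EuclideanSpace ℝ (Fin 3),
      |x 1| ≤ κx3 → |y 1| ≤ κx3 → |x 2| ≤ κx4 → |y 2| ≤ κx4 →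
      ‖h x - h y‖ ≤
        Real.sqrt 2 * (κx3 + κx4 + 2 * |β₁| * (κu3 + κu4) + Real.sqrt 2) *
          ‖x - y‖ := by
  intro x y hx1 hy1 hx2 hy2
  have hn2 : ‖x - y‖ ^ 2 = (x 0 - y 0) ^ 2 + (x 1 - y 1) ^ 2 + (x 2 - y 2) ^ 2 := by
    rw [EuclideanSpace.norm_eq, Real.sq_sqrt (by positivity)]
    simp [Fin.sum_univ_three, sq_abs]
  set d0 : ℝ := x 0 - y 0 with hd0
  set d1 : ℝ := x 1 - y 1 with hd1
  set d2 : ℝ := x 2 - y 2 with hd2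
  set A : ℝ := κx3 + κx4 + 2 * |β₁| * (κu3 + κu4) with hA
  have hAnn : 0 ≤ A := by positivity
  set n : ℝ := ‖x - y‖ with hn
  have hnn : 0 ≤ n := norm_nonneg _
  -- bound on |d0|
  have hb0 : |d0| ≤ n := by
    rw [show |d0| = Real.sqrt (d0 ^ 2) from (Real.sqrt_sq_eq_abs d0).symm,
      ← Real.sqrt_sq hnn]
    apply Real.sqrt_le_sqrt; nlinarith [sq_nonneg d1, sq_nonneg d2]
  -- bound on |d1| + |d2|
  have hb12 : |d1| + |d2| ≤ Real.sqrt 2 * n := by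
    have h1 : (|d1| + |d2|) ^ 2 ≤ 2 * n ^ 2 := by
      have := sq_nonneg (|d1| - |d2|)
      have e1 : |d1| ^ 2 = d1 ^ 2 := sq_abs d1
      have e2 : |d2| ^ 2 = d2 ^ 2 := sq_abs d2
      nlinarith
    rw [show |d1| + |d2| = Real.sqrt ((|d1| + |d2|) ^ 2) from
      (Real.sqrt_sq (by positivity)).symm,
      show Real.sqrt 2 * n = Real.sqrt (2 * n ^ 2) by
        rw [Real.sqrt_mul (by norm_num), Real.sqrt_sq hnn]]
    exact Real.sqrt_le_sqrt h1
  have hdd : |2 * x 0 - 2 * y 0| = 2 * |d0| := by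
    rw [show (2 : ℝ) * x 0 - 2 * y 0 = 2 * d0 by rw [hd0]; ring, abs_mul, abs_two]
  have hs2 : |Real.sin (2 * x 0) - Real.sin (2 * y 0)| ≤ 2 * |d0| :=
    hdd ▸ sin_lip' (2 * x 0) (2 * y 0)
  have hc2 : |Real.cos (2 * x 0) - Real.cos (2 * y 0)| ≤ 2 * |d0| :=
    hdd ▸ cos_lip' (2 * x 0) (2 * y 0)
  -- componentwise Lipschitz bounds
  set M : ℝ := A * |d0| + |d1| + |d2| with hM
  have key1 : |h x 0 - h y 0| ≤ M := by
    rw [hh1 x, hh1 y]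
    have e : x 1 * Real.cos (x 0) + x 2 * Real.sin (x 0)
        + β₁ * u₃ * Real.sin (2 * x 0) + β₁ * u₄ * Real.cos (2 * x 0)
        - (y 1 * Real.cos (y 0) + y 2 * Real.sin (y 0)
        + β₁ * u₃ * Real.sin (2 * y 0) + β₁ * u₄ * Real.cos (2 * y 0))
        = d1 * Real.cos (x 0) + y 1 * (Real.cos (x 0) - Real.cos (y 0))
        + d2 * Real.sin (x 0) + y 2 * (Real.sin (x 0) - Real.sin (y 0))
        + β₁ * u₃ * (Real.sin (2 * x 0) - Real.sin (2 * y 0))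
        + β₁ * u₄ * (Real.cos (2 * x 0) - Real.cos (2 * y 0)) := by
      rw [hd1, hd2]; ring
    rw [e]
    refine (abs_add₆ _ _ _ _ _ _).trans ?_
    have t1 : |d1 * Real.cos (x 0)| ≤ |d1| := by
      rw [abs_mul]; exact mul_le_of_le_one_right (abs_nonneg _) (Real.abs_cos_le_one _)
    have t2 : |y 1 * (Real.cos (x 0) - Real.cos (y 0))| ≤ κx3 * |d0| := by
      rw [abs_mul]
      exact mul_le_mul hy1 (cos_lip' _ _) (abs_nonneg _) hκx3
    have t3 : |d2 * Real.sin (x 0)| ≤ |d2| := by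
      rw [abs_mul]; exact mul_le_of_le_one_right (abs_nonneg _) (Real.abs_sin_le_one _)
    have t4 : |y 2 * (Real.sin (x 0) - Real.sin (y 0))| ≤ κx4 * |d0| := by
      rw [abs_mul]
      exact mul_le_mul hy2 (sin_lip' _ _) (abs_nonneg _) hκx4
    have t5 : |β₁ * u₃ * (Real.sin (2 * x 0) - Real.sin (2 * y 0))|
        ≤ |β₁| * κu3 * (2 * |d0|) := by
      rw [abs_mul, abs_mul]
      exact mul_le_mul (mul_le_mul_of_nonneg_left hu3 (abs_nonneg β₁)) hs2
        (abs_nonneg _) (by positivity)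
    have t6 : |β₁ * u₄ * (Real.cos (2 * x 0) - Real.cos (2 * y 0))|
        ≤ |β₁| * κu4 * (2 * |d0|) := by
      rw [abs_mul, abs_mul]
      exact mul_le_mul (mul_le_mul_of_nonneg_left hu4 (abs_nonneg β₁)) hc2
        (abs_nonneg _) (by positivity)
    rw [hM, hA]; linarith
  have key2 : |h x 1 - h y 1| ≤ M := by
    rw [hh2 x, hh2 y]
    have e : x 1 * Real.sin (x 0) - x 2 * Real.cos (x 0)
        - β₁ * u₃ * Real.cos (2 * x 0) - β₁ * u₄ * Real.sin (2 * x 0)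
        - (y 1 * Real.sin (y 0) - y 2 * Real.cos (y 0)
        - β₁ * u₃ * Real.cos (2 * y 0) - β₁ * u₄ * Real.sin (2 * y 0))
        = d1 * Real.sin (x 0) + y 1 * (Real.sin (x 0) - Real.sin (y 0))
        + (-d2) * Real.cos (x 0) + (-(y 2)) * (Real.cos (x 0) - Real.cos (y 0))
        + (-(β₁ * u₃)) * (Real.cos (2 * x 0) - Real.cos (2 * y 0))
        + (-(β₁ * u₄)) * (Real.sin (2 * x 0) - Real.sin (2 * y 0)) := by
      rw [hd1, hd2]; ring
    rw [e]
    refine (abs_add₆ _ _ _ _ _ _).trans ?_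
    have t1 : |d1 * Real.sin (x 0)| ≤ |d1| := by
      rw [abs_mul]; exact mul_le_of_le_one_right (abs_nonneg _) (Real.abs_sin_le_one _)
    have t2 : |y 1 * (Real.sin (x 0) - Real.sin (y 0))| ≤ κx3 * |d0| := by
      rw [abs_mul]
      exact mul_le_mul hy1 (sin_lip' _ _) (abs_nonneg _) hκx3
    have t3 : |(-d2) * Real.cos (x 0)| ≤ |d2| := by
      rw [abs_mul, abs_neg]
      exact mul_le_of_le_one_right (abs_nonneg _) (Real.abs_cos_le_one _)
    have t4 : |(-(y 2)) * (Real.cos (x 0) - Real.cos (y 0))| ≤ κx4 * |d0| := by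
      rw [abs_mul, abs_neg]
      exact mul_le_mul hy2 (cos_lip' _ _) (abs_nonneg _) hκx4
    have t5 : |(-(β₁ * u₃)) * (Real.cos (2 * x 0) - Real.cos (2 * y 0))|
        ≤ |β₁| * κu3 * (2 * |d0|) := by
      rw [abs_mul, abs_neg, abs_mul]
      exact mul_le_mul (mul_le_mul_of_nonneg_left hu3 (abs_nonneg β₁)) hc2
        (abs_nonneg _) (by positivity)
    have t6 : |(-(β₁ * u₄)) * (Real.sin (2 * x 0) - Real.sin (2 * y 0))|
        ≤ |β₁| * κu4 * (2 * |d0|) := by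
      rw [abs_mul, abs_neg, abs_mul]
      exact mul_le_mul (mul_le_mul_of_nonneg_left hu4 (abs_nonneg β₁)) hs2
        (abs_nonneg _) (by positivity)
    rw [hM, hA]; linarith
  -- assemble
  have hMnn : 0 ≤ M := by positivity
  have hMle : M ≤ (A + Real.sqrt 2) * n := by
    have h1 : A * |d0| ≤ A * n := mul_le_mul_of_nonneg_left hb0 hAnn
    rw [hM]
    have e : (A + Real.sqrt 2) * n = A * n + Real.sqrt 2 * n := by ring
    linarith
  have hnormhx : ‖h x - h y‖ = Real.sqrt ((h x 0 - h y 0) ^ 2 + (h x 1 - h y 1) ^ 2) := by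
    rw [EuclideanSpace.norm_eq]
    simp [Fin.sum_univ_two, sq_abs]
  rw [hnormhx]
  have hsq1 : (h x 0 - h y 0) ^ 2 ≤ M ^ 2 := by
    rw [← sq_abs]; exact pow_le_pow_left₀ (abs_nonneg _) key1 2
  have hsq2 : (h x 1 - h y 1) ^ 2 ≤ M ^ 2 := by
    rw [← sq_abs]; exact pow_le_pow_left₀ (abs_nonneg _) key2 2
  calc Real.sqrt ((h x 0 - h y 0) ^ 2 + (h x 1 - h y 1) ^ 2)
      ≤ Real.sqrt (2 * M ^ 2) := by
        apply Real.sqrt_le_sqrt; linarith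
    _ = Real.sqrt 2 * M := by
        rw [Real.sqrt_mul (by norm_num), Real.sqrt_sq hMnn]
    _ ≤ Real.sqrt 2 * ((A + Real.sqrt 2) * n) := by
        have := mul_le_mul_of_nonneg_left hMle (Real.sqrt_nonneg 2)
        linarith
    _ = Real.sqrt 2 * (κx3 + κx4 + 2 * |β₁| * (κu3 + κu4) + Real.sqrt 2) * n := by
        rw [hA]; ring
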